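/- arXiv:0906.3574 — 3 statements merged into one kernel-verified Lean document; each statement's English description precedes it below -/
import Mathlib

section
/- Let G be a finite group, let n = μ(G), and let φ : G → Sym(n) be an injective group homomorphism. Suppose K is a nontrivial subgroup of Sym(n) such that every element of K commutes with every element of the image φ(G), and K intersects φ(G) trivially. Then μ(G × K) = μ(G), and in particular μ(G × K) < μ(G) + μ(K). -/
/-- The minimal faithful permutation degree of a group `G`: the least `n` such that
`G` embeds into the symmetric group `Sym(n) = Equiv.Perm (Fin n)`. -/
noncomputable def minFaithfulDegree (G : Type*) [Group G] : ℕ :=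
  sInf {n : ℕ | ∃ φ : G →* Equiv.Perm (Fin n), Function.Injective φ}

/-! The faithful action of `G` on `Fin n` extends to `G × K` by letting `K` act through its own
embedding; the two actions commute and meet trivially, so `G × K` embeds in `Sym(n)` and
`μ(G × K) ≤ μ(G)`. The reverse inequality holds because `G` is a subgroup of `G × K`, and
`μ(K) > 0` because `K` is nontrivial. -/

open Equiv Function

section MinFaithfulDegree

variable {G H : Type*} [Group G] [Group H]

theorem minFaithfulDegree_le {n : ℕ} (φ : G →* Perm (Fin n)) (hφ : Injective φ) :
    minFaithfulDegree G ≤ n :=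
  Nat.sInf_le ⟨φ, hφ⟩

theorem exists_injective_minFaithfulDegree {n : ℕ} (φ : G →* Perm (Fin n)) (hφ : Injective φ) :
    ∃ ψ : G →* Perm (Fin (minFaithfulDegree G)), Injective ψ :=
  Nat.sInf_mem (s := {m | ∃ ψ : G →* Perm (Fin m), Injective ψ}) ⟨n, φ, hφ⟩

theorem minFaithfulDegree_le_of_injective (f : G →* H) (hf : Injective f) {n : ℕ}
    (φ : H →* Perm (Fin n)) (hφ : Injective φ) :
    minFaithfulDegree G ≤ minFaithfulDegree H := by
  obtain ⟨ψ, hψ⟩ := exists_injective_minFaithfulDegree φ hφ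
  exact minFaithfulDegree_le (ψ.comp f) (hψ.comp hf)

theorem minFaithfulDegree_pos [Nontrivial G] {n : ℕ} (φ : G →* Perm (Fin n))
    (hφ : Injective φ) : 0 < minFaithfulDegree G := by
  obtain ⟨ψ, hψ⟩ := exists_injective_minFaithfulDegree φ hφ
  refine Nat.pos_of_ne_zero fun h => ?_
  obtain ⟨x, y, hxy⟩ := exists_pair_ne G
  have : Subsingleton (Perm (Fin (minFaithfulDegree G))) := by rw [h]; infer_instance
  exact hxy (hψ (Subsingleton.elim _ _))

end MinFaithfulDegree

theorem MonoidHom.injective_noncommCoprod_subtype {G H : Type*} [Group G] [Group H]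
    {φ : G →* H} (hφ : Injective φ) {K : Subgroup H} (hcomm : ∀ g (k : K), Commute (φ g) k)
    (hdisj : K ⊓ φ.range = ⊥) : Injective (φ.noncommCoprod K.subtype hcomm) := by
  refine (MonoidHom.noncommCoprod_injective _ _ _).mpr ⟨hφ, K.subtype_injective, ?_⟩
  rw [K.range_subtype]
  exact (disjoint_iff.mpr hdisj).symm

theorem mu_prod_centralizing_complement_general (G : Type*) [Group G]
    (n : ℕ) (hn : n = minFaithfulDegree G)
    (φ : G →* Equiv.Perm (Fin n)) (hφ : Function.Injective φ)
    (K : Subgroup (Equiv.Perm (Fin n))) (hK : K ≠ ⊥)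
    (hcomm : ∀ k ∈ K, ∀ g : G, Commute k (φ g))
    (hdisj : K ⊓ φ.range = ⊥) :
    minFaithfulDegree (G × K) = minFaithfulDegree G ∧
      minFaithfulDegree (G × K) < minFaithfulDegree G + minFaithfulDegree K := by
  have hψ := φ.injective_noncommCoprod_subtype hφ (fun g k => (hcomm k k.2 g).symm) hdisj
  have hle : minFaithfulDegree (G × K) ≤ minFaithfulDegree G :=
    hn ▸ minFaithfulDegree_le _ hψ
  have hge : minFaithfulDegree G ≤ minFaithfulDegree (G × K) :=
    minFaithfulDegree_le_of_injective (MonoidHom.inl G K) (Prod.mk_left_injective 1) _ hψ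
  have : Nontrivial K := K.nontrivial_iff_ne_bot.mpr hK
  have hKpos : 0 < minFaithfulDegree K := minFaithfulDegree_pos K.subtype K.subtype_injective
  omega

theorem mu_prod_centralizing_complement (G : Type*) [Group G] [Finite G]
    (n : ℕ) (hn : n = minFaithfulDegree G)
    (φ : G →* Equiv.Perm (Fin n)) (hφ : Function.Injective φ)
    (K : Subgroup (Equiv.Perm (Fin n))) (hK : K ≠ ⊥)
    (hcomm : ∀ k ∈ K, ∀ g : G, Commute k (φ g))
    (hdisj : K ⊓ φ.range = ⊥) :
    minFaithfulDegree (G × K) = minFaithfulDegree G ∧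
      minFaithfulDegree (G × K) < minFaithfulDegree G + minFaithfulDegree K :=
  mu_prod_centralizing_complement_general G n hn φ hφ K hK hcomm hdisj
end

section
/- For every natural number m with m ≤ 9, every subgroup G of Sym(m) that is minimally embedded (i.e., G admits no injective group homomorphism into Sym(k) for any k < m), and every element g of the centralizer of G in Sym(m) of order 2, the element g belongs to G. -/
/-!
Let `z` be the involution. For a point `x` moved by `z`, the `z`-orbits `{p, z p}` in the
`G`-orbit of `{x, z x}` cover a set `Δ` of `2n ≤ 9` points, so `n ≤ 4`. It suffices to show that
the restriction of `z` to `Δ` lies in `G` and to induct on the support of `z`. Minimality means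
that `G` acts with a nontrivial kernel on every `G`-set of fewer than `m` points.

Acting on the `n` pairs together with the `m - 2n` points outside `Δ` gives a nontrivial element of
`G` that fixes every pair setwise and every point outside `Δ`. Such elements form a nonzero binary
code on the pairs, invariant under the transitive action of `G`; for `n ∈ {1, 2, 4}` a
minimal-weight argument shows that the code contains the all-ones word, which is the restriction
of `z`. For `n = 3`, `G` acts instead on the four classes `{T, z • T}` of transversals of the pairs
and on the `m - 6` outside points, and a nontrivial kernel element acts on `Δ` as `z`.
-/

open Equiv Function Pointwise

namespace Finset

variable {β : Type*} [DecidableEq β] {X : Finset β} {S : Set (Finset β)}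

theorem card_symmDiff_add_two_mul_card_inter (A B : Finset β) :
    (symmDiff A B).card + 2 * (A ∩ B).card = A.card + B.card := by
  have := card_union_add_card_inter A B
  have := card_le_card (inter_subset_union (s := A) (t := B))
  rw [symmDiff_eq_sup_sdiff_inf, sup_eq_union, inf_eq_inter,
    card_sdiff_of_subset inter_subset_union]
  omega

theorem mem_of_forall_singleton_mem (hempty : ∅ ∈ S)
    (hsymm : ∀ A ∈ S, ∀ B ∈ S, symmDiff A B ∈ S) (hsingle : ∀ b ∈ X, {b} ∈ S) : X ∈ S := by
  induction X using Finset.induction_on with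
  | empty => exact hempty
  | insert b X hb ih =>
    rw [insert_eq, ← sup_eq_union, ← (disjoint_singleton_left.2 hb).symmDiff_eq_sup]
    exact hsymm _ (hsingle b (mem_insert_self b X)) _
      (ih fun c hc => hsingle c (mem_insert_of_mem hc))

theorem mem_of_disjoint_of_two_le_card (hX : X.card ≤ 4) (hSX : ∀ A ∈ S, A ⊆ X)
    (hsymm : ∀ A ∈ S, ∀ B ∈ S, symmDiff A B ∈ S) (hmin : ∀ A ∈ S, A.Nonempty → 2 ≤ A.card)
    {D E : Finset β} (hD : D ∈ S) (hE : E ∈ S) (hDne : D.Nonempty) (hEne : E.Nonempty)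
    (hDE : Disjoint D E) : X ∈ S := by
  have hDEX : symmDiff D E = X := by
    refine eq_of_subset_of_card_le
      (symmDiff_subset_union.trans (union_subset (hSX D hD) (hSX E hE))) ?_
    rw [hDE.symmDiff_eq_sup, sup_eq_union, card_union_of_disjoint hDE]
    have := hmin D hD hDne
    have := hmin E hE hEne
    omega
  exact hDEX ▸ hsymm D hD E hE

theorem mem_of_card_eq_two (hX : X.card = 4) (hSX : ∀ A ∈ S, A ⊆ X)
    (hsymm : ∀ A ∈ S, ∀ B ∈ S, symmDiff A B ∈ S)
    (hcover : ∀ A ∈ S, A.Nonempty → ∀ b ∈ X, ∃ B ∈ S, B.card = A.card ∧ b ∈ B)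
    (hmin : ∀ A ∈ S, A.Nonempty → 2 ≤ A.card) {A : Finset β} (hA : A ∈ S) (hA2 : A.card = 2) :
    X ∈ S := by
  have hAne : A.Nonempty := card_pos.1 (by omega)
  have hfill {D E : Finset β} :=
    mem_of_disjoint_of_two_le_card (D := D) (E := E) hX.le hSX hsymm hmin
  obtain ⟨b, hbX, hbA⟩ := exists_mem_notMem_of_card_lt_card (s := A) (t := X) (by omega)
  obtain ⟨B, hB, hB2, hbB⟩ := hcover A hA hAne b hbX
  by_cases hAB : Disjoint A B
  · exact hfill hA hB hAne ⟨b, hbB⟩ hAB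
  -- otherwise `A ∪ B` has three points, and any pair through the fourth one, `d`, is disjoint
  -- from one of `A`, `B`, `A ∆ B`
  obtain ⟨d, hdX, hd⟩ : ∃ d ∈ X, d ∉ A ∪ B := exists_mem_notMem_of_card_lt_card (by
    have := card_union_add_card_inter A B
    have := card_pos.2 (not_disjoint_iff_nonempty_inter.1 hAB)
    omega)
  rw [mem_union, not_or] at hd
  obtain ⟨D, hD, hD2, hdD⟩ := hcover A hA hAne d hdX
  obtain ⟨t, ht⟩ := card_eq_one.1 (show (D.erase d).card = 1 by rw [card_erase_of_mem hdD]; omega)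
  have hDdt : D = {d, t} := by rw [← insert_erase hdD, ht]
  by_cases htA : t ∈ A
  · by_cases htB : t ∈ B
    · refine hfill hD (hsymm A hA B hB) ⟨d, hdD⟩ (symmDiff_nonempty.2 fun h => hbA (h ▸ hbB)) ?_
      rw [hDdt]
      simp [mem_symmDiff, htA, htB, hd]
    · exact hfill hD hB ⟨d, hdD⟩ ⟨b, hbB⟩ (by rw [hDdt]; simp [hd, htB])
  · exact hfill hD hA ⟨d, hdD⟩ hAne (by rw [hDdt]; simp [hd, htA])

theorem exists_card_eq_two_of_card_eq_three (hX : X.card = 4) (hSX : ∀ A ∈ S, A ⊆ X)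
    (hsymm : ∀ A ∈ S, ∀ B ∈ S, symmDiff A B ∈ S)
    (hcover : ∀ A ∈ S, A.Nonempty → ∀ b ∈ X, ∃ B ∈ S, B.card = A.card ∧ b ∈ B)
    {A : Finset β} (hA : A ∈ S) (hA3 : A.card = 3) : ∃ B ∈ S, B.card = 2 := by
  obtain ⟨b, hbX, hbA⟩ := exists_mem_notMem_of_card_lt_card (s := A) (t := X) (by omega)
  obtain ⟨B, hB, hB3, hbB⟩ := hcover A hA (card_pos.1 (by omega)) b hbX
  refine ⟨symmDiff A B, hsymm A hA B hB, ?_⟩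
  have := card_symmDiff_add_two_mul_card_inter A B
  have := card_union_add_card_inter A B
  have := card_le_card (union_subset (hSX A hA) (hSX B hB))
  have := card_lt_card
    (ssubset_iff_of_subset subset_union_left |>.2 ⟨b, mem_union_right A hbB, hbA⟩)
  omega

/-- Subsets of `X` under symmetric difference are the binary words on `X`, and `X` is the all-ones
word. For `X.card = 3` the even-weight words are a counterexample. -/
theorem mem_of_invariant_code {H : Type*} [Group H] [MulAction H β] (hX4 : X.card ≤ 4)
    (hX3 : X.card ≠ 3) (htrans : ∀ a ∈ X, ∀ b ∈ X, ∃ h : H, h • a = b) (hSX : ∀ A ∈ S, A ⊆ X)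
    (hsymm : ∀ A ∈ S, ∀ B ∈ S, symmDiff A B ∈ S) (hsmul : ∀ h : H, ∀ A ∈ S, h • A ∈ S)
    (hne : ∃ A ∈ S, A.Nonempty) : X ∈ S := by
  have hcover : ∀ A ∈ S, A.Nonempty → ∀ b ∈ X, ∃ B ∈ S, B.card = A.card ∧ b ∈ B := by
    rintro A hA ⟨a, ha⟩ b hb
    obtain ⟨h, rfl⟩ := htrans a (hSX A hA ha) b hb
    exact ⟨h • A, hsmul h A hA, card_smul_finset h A, smul_mem_smul_finset ha⟩
  have hfin : {A | A ∈ S ∧ A.Nonempty}.Finite :=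
    X.powerset.finite_toSet.subset fun A hA => mem_powerset.2 (hSX A hA.1)
  obtain ⟨A, ⟨hA, hAne⟩, hmin⟩ := Set.exists_min_image _ card hfin hne
  have hmin' : ∀ B ∈ S, B.Nonempty → A.card ≤ B.card := fun B hB hBne => hmin B ⟨hB, hBne⟩
  have hAX : A.card ≤ X.card := card_le_card (hSX A hA)
  have hA0 : 0 < A.card := hAne.card_pos
  obtain hA1 | hAX | ⟨hX, hA2 | hA3⟩ :
      A.card = 1 ∨ A.card = X.card ∨ X.card = 4 ∧ (A.card = 2 ∨ A.card = 3) := by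
    omega
  · refine mem_of_forall_singleton_mem (by simpa using hsymm A hA A hA) hsymm fun b hb => ?_
    obtain ⟨B, hB, hB1, hbB⟩ := hcover A hA hAne b hb
    obtain ⟨c, rfl⟩ := card_eq_one.1 (hB1.trans hA1)
    rwa [mem_singleton.1 hbB]
  · rwa [← eq_of_subset_of_card_le (hSX A hA) hAX.ge]
  · exact mem_of_card_eq_two hX hSX hsymm hcover (fun B hB hBne => hA2 ▸ hmin' B hB hBne) hA hA2
  · obtain ⟨B, hB, hB2⟩ := exists_card_eq_two_of_card_eq_three hX hSX hsymm hcover hA hA3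
    have := hmin' B hB (card_pos.1 (by omega))
    omega

end Finset

namespace Equiv.Perm

variable {α : Type*} {z g : Perm α} {p q : α}

theorem apply_apply_of_commute (h : Commute g z) (p : α) : g (z p) = z (g p) :=
  Perm.ext_iff.1 h.eq p

section

variable [DecidableEq α]

theorem apply_mem_smul_finset_iff (g : Perm α) {s : Finset α} : g p ∈ g • s ↔ p ∈ s :=
  Finset.smul_mem_smul_finset_iff g

theorem mem_smul_finset_iff_of_involutive (hz : Involutive z) {s : Finset α} :
    p ∈ z • s ↔ z p ∈ s := by
  have : z⁻¹ p = z p := by rw [Perm.inv_eq_iff_eq, hz p]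
  rw [← Finset.inv_smul_mem_iff, Perm.smul_def, this]

theorem smul_smul_finset_of_involutive (hz : Involutive z) (s : Finset α) : z • z • s = s := by
  ext p
  rw [mem_smul_finset_iff_of_involutive hz, mem_smul_finset_iff_of_involutive hz, hz p]

def orbitPair (z : Perm α) (p : α) : Finset α := {p, z p}

@[simp]
theorem mem_orbitPair : q ∈ z.orbitPair p ↔ q = p ∨ q = z p := by
  simp [orbitPair]

theorem orbitPair_apply (hz : Involutive z) (p : α) : z.orbitPair (z p) = z.orbitPair p := by
  rw [orbitPair, orbitPair, hz p, Finset.pair_comm]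

theorem apply_mem_orbitPair_iff (hz : Involutive z) : z q ∈ z.orbitPair p ↔ q ∈ z.orbitPair p := by
  rw [mem_orbitPair, mem_orbitPair, hz.injective.eq_iff, ← hz.eq_iff, or_comm]

theorem orbitPair_eq_orbitPair_iff (hz : Involutive z) :
    z.orbitPair p = z.orbitPair q ↔ p ∈ z.orbitPair q := by
  refine ⟨fun h => h ▸ by simp, fun h => ?_⟩
  rcases mem_orbitPair.1 h with rfl | rfl
  exacts [rfl, orbitPair_apply hz q]

theorem smul_orbitPair (hg : Commute g z) (p : α) : g • z.orbitPair p = z.orbitPair (g p) := by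
  rw [orbitPair, orbitPair, Finset.smul_finset_insert, Finset.smul_finset_singleton, Perm.smul_def,
    Perm.smul_def, apply_apply_of_commute hg]

theorem card_orbitPair_eq_two_iff : (z.orbitPair p).card = 2 ↔ z p ≠ p :=
  ⟨fun h hp => by simp [orbitPair, hp] at h, fun h => Finset.card_pair h.symm⟩

theorem orbitPair_mem_image_iff (hz : Involutive z) {s : Finset α} (hs : ∀ q ∈ s, z q ∈ s) :
    z.orbitPair p ∈ s.image z.orbitPair ↔ p ∈ s := by
  refine ⟨fun h => ?_, Finset.mem_image_of_mem _⟩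
  obtain ⟨q, hq, hqp⟩ := Finset.mem_image.1 h
  rcases mem_orbitPair.1 ((orbitPair_eq_orbitPair_iff hz).1 hqp.symm) with rfl | rfl
  exacts [hq, hs q hq]

theorem card_eq_two_mul_card_image_orbitPair (hz : Involutive z) {s : Finset α}
    (hs : ∀ q ∈ s, z q ∈ s) (hfix : ∀ q ∈ s, z q ≠ q) :
    s.card = 2 * (s.image z.orbitPair).card := by
  rw [Finset.card_eq_sum_card_image z.orbitPair s, mul_comm, ← smul_eq_mul, ← Finset.sum_const]
  refine Finset.sum_congr rfl fun Q hQ => ?_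
  obtain ⟨q, hq, rfl⟩ := Finset.mem_image.1 hQ
  have hfiber : s.filter (fun p => z.orbitPair p = z.orbitPair q) = z.orbitPair q := by
    ext p
    rw [Finset.mem_filter, orbitPair_eq_orbitPair_iff hz, and_iff_right_iff_imp]
    intro h
    rcases mem_orbitPair.1 h with rfl | rfl
    exacts [hq, hs q hq]
  rw [hfiber, card_orbitPair_eq_two_iff.2 (hfix q hq)]

def IsPairFlip (z : Perm α) (𝒜 : Finset (Finset α)) (g : Perm α) : Prop :=
  ∀ p, g p = if z.orbitPair p ∈ 𝒜 then z p else p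

variable {𝒜 ℬ : Finset (Finset α)} {h : Perm α} {Δ : Finset α}

theorem IsPairFlip.mul (hz : Involutive z) (hg : z.IsPairFlip 𝒜 g) (hh : z.IsPairFlip ℬ h) :
    z.IsPairFlip (symmDiff 𝒜 ℬ) (g * h) := by
  intro p
  by_cases hA : z.orbitPair p ∈ 𝒜 <;> by_cases hB : z.orbitPair p ∈ ℬ <;>
    simp [Finset.mem_symmDiff, hA, hB, hg _, hh p, orbitPair_apply hz, hz p]

theorem IsPairFlip.conj (hg : z.IsPairFlip 𝒜 g) (hh : Commute h z) :
    z.IsPairFlip (h • 𝒜) (h * g * h⁻¹) := by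
  intro p
  have hmem : z.orbitPair p ∈ h • 𝒜 ↔ z.orbitPair (h⁻¹ p) ∈ 𝒜 := by
    rw [← Finset.inv_smul_mem_iff, smul_orbitPair hh.inv_left]
  rw [mul_apply, mul_apply, hg, apply_ite h, apply_apply_of_commute hh]
  simp only [hmem, Perm.coe_inv, apply_symm_apply]

theorem isPairFlip_image_orbitPair_iff (hz : Involutive z) (hΔz : ∀ p ∈ Δ, z p ∈ Δ) :
    z.IsPairFlip (Δ.image z.orbitPair) g ↔ ∀ p, g p = if p ∈ Δ then z p else p := by
  simp only [IsPairFlip, orbitPair_mem_image_iff hz hΔz]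

theorem isPairFlip_of_smul_orbitPair_eq (hz : Involutive z) (hΔz : ∀ p ∈ Δ, z p ∈ Δ)
    (hgz : Commute g z) (hgΔ : ∀ p ∈ Δ, g • z.orbitPair p = z.orbitPair p)
    (hout : ∀ p ∉ Δ, g p = p) :
    z.IsPairFlip ((Δ.filter fun p => g p ≠ p).image z.orbitPair) g := by
  have hs : ∀ q ∈ Δ.filter (fun p => g p ≠ p), z q ∈ Δ.filter (fun p => g p ≠ p) := by
    intro q hq
    rw [Finset.mem_filter] at hq ⊢
    refine ⟨hΔz q hq.1, fun h => hq.2 (z.injective ?_)⟩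
    rw [← apply_apply_of_commute hgz, h]
  intro p
  simp only [orbitPair_mem_image_iff hz hs, Finset.mem_filter]
  by_cases hp : p ∈ Δ
  · have hgp := (apply_mem_smul_finset_iff g).2 (show p ∈ z.orbitPair p by simp)
    rw [hgΔ p hp, mem_orbitPair] at hgp
    rcases hgp with h | h <;> simp [hp, h]
  · simp [hp, hout p hp]

end

variable {Δ T : Finset α}

def IsTransversal (z : Perm α) (Δ T : Finset α) : Prop :=
  T ⊆ Δ ∧ ∀ p ∈ Δ, p ∈ T ↔ z p ∉ T

theorem IsTransversal.apply_notMem (hT : z.IsTransversal Δ T) (hp : p ∈ T) : z p ∉ T :=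
  (hT.2 p (hT.1 hp)).1 hp

variable [DecidableEq α]

instance (z : Perm α) (Δ T : Finset α) : Decidable (z.IsTransversal Δ T) := by
  unfold IsTransversal
  infer_instance

theorem IsTransversal.smul (hT : z.IsTransversal Δ T) (hg : Commute g z)
    (hgΔ : ∀ p, g p ∈ Δ ↔ p ∈ Δ) : z.IsTransversal Δ (g • T) := by
  refine ⟨fun q hq => ?_, fun q hq => ?_⟩
  · obtain ⟨p, hp, rfl⟩ := Finset.mem_smul_finset.1 hq
    exact (hgΔ p).2 (hT.1 hp)
  · obtain ⟨p, rfl⟩ := g.surjective q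
    rw [← apply_apply_of_commute hg, apply_mem_smul_finset_iff, apply_mem_smul_finset_iff]
    exact hT.2 p ((hgΔ p).1 hq)

theorem IsTransversal.symmDiff_orbitPair (hz : Involutive z) (hΔz : ∀ p ∈ Δ, z p ∈ Δ)
    (hT : z.IsTransversal Δ T) (hp : p ∈ Δ) : z.IsTransversal Δ (symmDiff T (z.orbitPair p)) := by
  refine ⟨Finset.symmDiff_subset_union.trans (Finset.union_subset hT.1 fun q hq => ?_),
    fun q hq => ?_⟩
  · rcases mem_orbitPair.1 hq with rfl | rfl
    exacts [hp, hΔz _ hp]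
  · have := hT.2 q hq
    have := apply_mem_orbitPair_iff hz (p := p) (q := q)
    simp only [Finset.mem_symmDiff]
    tauto

theorem IsTransversal.two_mul_card (hz : Involutive z) (hΔz : ∀ p ∈ Δ, z p ∈ Δ)
    (hT : z.IsTransversal Δ T) : 2 * T.card = Δ.card := by
  have hzT : z • T = Δ \ T := by
    ext p
    rw [mem_smul_finset_iff_of_involutive hz, Finset.mem_sdiff]
    refine ⟨fun h => ⟨hz p ▸ hΔz _ (hT.1 h), fun hp => hT.apply_notMem hp h⟩, fun h => ?_⟩
    exact not_not.1 fun h' => h.2 ((hT.2 p h.1).2 h')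
  have := congrArg Finset.card hzT
  rw [Finset.card_smul_finset, Finset.card_sdiff_of_subset hT.1] at this
  have := Finset.card_le_card hT.1
  omega

theorem exists_isTransversal_superset [Fintype α] (hz : Involutive z) (hΔz : ∀ p ∈ Δ, z p ∈ Δ)
    (hΔfix : ∀ p ∈ Δ, z p ≠ p) {s : Finset α} (hsΔ : s ⊆ Δ) (hs : ∀ p ∈ s, z p ∉ s) :
    ∃ T, z.IsTransversal Δ T ∧ s ⊆ T := by
  -- outside `s`, pick from each pair the point that comes first in an enumeration of `α`
  let e := Fintype.equivFin α
  refine ⟨s ∪ Δ.filter (fun p => p ∉ s ∧ z p ∉ s ∧ e p < e (z p)),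
    ⟨Finset.union_subset hsΔ (Finset.filter_subset _ _), fun p hp => ?_⟩, Finset.subset_union_left⟩
  have hne : e p ≠ e (z p) := e.injective.ne (hΔfix p hp).symm
  have := hs p
  have := hs (z p)
  simp only [Finset.mem_union, Finset.mem_filter, hz p, hp, hΔz p hp, true_and]
  rcases lt_or_gt_of_ne hne with h | h
  · have := lt_asymm h
    tauto
  · have := lt_asymm h
    tauto

theorem exists_isTransversal_mem_mem [Fintype α] (hz : Involutive z) (hΔz : ∀ p ∈ Δ, z p ∈ Δ)
    (hΔfix : ∀ p ∈ Δ, z p ≠ p) (hp : p ∈ Δ) (hq : q ∈ Δ) (hpq : q ∉ z.orbitPair p) :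
    ∃ T, z.IsTransversal Δ T ∧ p ∈ T ∧ q ∈ T := by
  rw [mem_orbitPair, not_or] at hpq
  obtain ⟨T, hT, hsT⟩ := exists_isTransversal_superset hz hΔz hΔfix (s := {p, q})
    (by simp [Finset.insert_subset_iff, hp, hq]) (by
      have := hΔfix p hp
      have := hΔfix q hq
      have : z q ≠ p := fun h => hpq.2 (h ▸ (hz q).symm)
      simp only [Finset.mem_insert, Finset.mem_singleton]
      grind)
  exact ⟨T, hT, hsT (by simp), hsT (by simp)⟩

theorem apply_mem_orbitPair_of_forall_isTransversal [Fintype α] (hz : Involutive z)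
    (hΔz : ∀ p ∈ Δ, z p ∈ Δ) (hΔfix : ∀ p ∈ Δ, z p ≠ p) (hΔ : Δ.card = 6) (hgz : Commute g z)
    (hg : ∀ T, z.IsTransversal Δ T → g • T = T ∨ g • T = z • T) (hp : p ∈ Δ) :
    g p ∈ z.orbitPair p := by
  have hzT : ∀ {U : Finset α} {y}, y ∈ z • U ↔ z y ∈ U := mem_smul_finset_iff_of_involutive hz
  have hmaps : ∀ {U V : Finset α} {y}, g • U = V → y ∈ U → g y ∈ V :=
    fun h hy => h ▸ (apply_mem_smul_finset_iff g).2 hy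
  by_contra hgp
  set P := z.orbitPair p
  -- `Δ` has three pairs, so `P` and `g⁻¹ • P` do not cover it
  obtain ⟨s, hsΔ, hs⟩ := Finset.exists_mem_notMem_of_card_lt_card (s := P ∪ g⁻¹ • P) (t := Δ) (by
    have := Finset.card_union_le P (g⁻¹ • P)
    rw [Finset.card_smul_finset, card_orbitPair_eq_two_iff.2 (hΔfix p hp)] at this
    omega)
  rw [Finset.mem_union, not_or, Finset.mem_inv_smul_finset_iff, Perm.smul_def] at hs
  obtain ⟨hsP, hgsP⟩ := hs
  obtain ⟨T, hT, hpT, hsT⟩ := exists_isTransversal_mem_mem hz hΔz hΔfix hp hsΔ hsP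
  have hT' := hT.symmDiff_orbitPair hz hΔz hp
  set T' := symmDiff T P
  have hagree : ∀ y ∉ P, y ∈ T' ↔ y ∈ T := fun y hy => by simp [T', Finset.mem_symmDiff, hy]
  have hzpT' : z p ∈ T' := by simp [T', P, Finset.mem_symmDiff, hT.apply_notMem hpT]
  have hsT' : s ∈ T' := (hagree s hsP).2 hsT
  have hzgp : z (g p) ∉ P := by rwa [apply_mem_orbitPair_iff hz]
  have hzgs : z (g s) ∉ P := by rwa [apply_mem_orbitPair_iff hz]
  rcases hg T hT with h | h <;> rcases hg T' hT' with h' | h'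
  · have h2 := hmaps h' hzpT'
    rw [apply_apply_of_commute hgz] at h2
    exact hT.apply_notMem (hmaps h hpT) ((hagree _ hzgp).1 h2)
  · exact hT.apply_notMem (hmaps h hsT) ((hagree _ hzgs).1 (hzT.1 (hmaps h' hsT')))
  · exact hT.apply_notMem ((hagree _ hgsP).1 (hmaps h' hsT')) (hzT.1 (hmaps h hsT))
  · have h2 := hzT.1 (hmaps h' hzpT')
    rw [apply_apply_of_commute hgz, hz] at h2
    exact hT.apply_notMem ((hagree _ hgp).1 h2) (hzT.1 (hmaps h hpT))

theorem apply_ne_self_of_forall_isTransversal [Fintype α] (hz : Involutive z)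
    (hΔz : ∀ p ∈ Δ, z p ∈ Δ) (hΔfix : ∀ p ∈ Δ, z p ≠ p) (hgz : Commute g z)
    (hg : ∀ T, z.IsTransversal Δ T → g • T = T ∨ g • T = z • T) (hp : p ∈ Δ) (hq : q ∈ Δ)
    (hgq : g q = z q) : g p ≠ p := by
  intro hgp
  have hqp : q ∉ z.orbitPair p := by
    rw [mem_orbitPair]
    rintro (rfl | rfl)
    · exact hΔfix q hq (hgq.symm.trans hgp)
    · rw [apply_apply_of_commute hgz, hgp, hz] at hgq
      exact hΔfix p hp hgq
  obtain ⟨T, hT, hpT, hqT⟩ := exists_isTransversal_mem_mem hz hΔz hΔfix hp hq hqp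
  rcases hg T hT with h | h
  · have hgqT : g q ∈ T := h ▸ (apply_mem_smul_finset_iff g).2 hqT
    exact hT.apply_notMem hqT (hgq ▸ hgqT)
  · have hgpT : g p ∈ z • T := h ▸ (apply_mem_smul_finset_iff g).2 hpT
    rw [hgp, mem_smul_finset_iff_of_involutive hz] at hgpT
    exact hT.apply_notMem hpT hgpT

/-- The centralizer of `z` in `Sym(Δ)`, here `C₂ ≀ S₃`, acts on the four classes `{T, z • T}` (the
long diagonals of a cube) with kernel `{1, z}`. -/
theorem forall_apply_eq_or_of_forall_isTransversal [Fintype α] (hz : Involutive z)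
    (hΔz : ∀ p ∈ Δ, z p ∈ Δ) (hΔfix : ∀ p ∈ Δ, z p ≠ p) (hΔ : Δ.card = 6) (hgz : Commute g z)
    (hg : ∀ T, z.IsTransversal Δ T → g • T = T ∨ g • T = z • T) :
    (∀ p ∈ Δ, g p = p) ∨ ∀ p ∈ Δ, g p = z p := by
  have hpair p (hp : p ∈ Δ) :=
    mem_orbitPair.1 (apply_mem_orbitPair_of_forall_isTransversal hz hΔz hΔfix hΔ hgz hg hp)
  by_cases h : ∃ q ∈ Δ, g q = z q
  · obtain ⟨q, hq, hgq⟩ := h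
    exact .inr fun p hp => (hpair p hp).resolve_left
      (apply_ne_self_of_forall_isTransversal hz hΔz hΔfix hgz hg hp hq hgq)
  · push Not at h
    exact .inl fun p hp => (hpair p hp).resolve_right (h p hp)

theorem IsTransversal.erase_mem (hz : Involutive z) (hΔz : ∀ p ∈ Δ, z p ∈ Δ) (hΔ : Δ.card = 6)
    (hT : z.IsTransversal Δ T) {x y : α} (hxT : x ∈ T) :
    T.erase x ∈ ((Δ \ z.orbitPair x).powersetCard 2).erase (z.orbitPair y) := by
  refine Finset.mem_erase.2 ⟨fun h => ?_, Finset.mem_powersetCard.2 ⟨fun q hq => ?_, ?_⟩⟩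
  · have hy : y ∈ T.erase x := h ▸ (by simp)
    have hzy : z y ∈ T.erase x := h ▸ (by simp)
    exact hT.apply_notMem (Finset.mem_of_mem_erase hy) (Finset.mem_of_mem_erase hzy)
  · obtain ⟨hqx, hqT⟩ := Finset.mem_erase.1 hq
    refine Finset.mem_sdiff.2 ⟨hT.1 hqT, fun hqP => ?_⟩
    rcases mem_orbitPair.1 hqP with rfl | rfl
    exacts [hqx rfl, hT.apply_notMem hxT hqT]
  · have := hT.two_mul_card hz hΔz
    rw [Finset.card_erase_of_mem hxT]
    omega

theorem card_image_pair_isTransversal_le_five (hz : Involutive z) (hΔz : ∀ p ∈ Δ, z p ∈ Δ)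
    (hΔfix : ∀ p ∈ Δ, z p ≠ p) (hΔ : Δ.card = 6) :
    ((Δ.powerset.filter (z.IsTransversal Δ)).image
      fun T => ({T, z • T} : Finset (Finset α))).card ≤ 5 := by
  obtain ⟨x, hx⟩ : Δ.Nonempty := Finset.card_pos.1 (by omega)
  set P := z.orbitPair x
  have hPΔ : P ⊆ Δ := fun q hq => by
    rcases mem_orbitPair.1 hq with rfl | rfl
    exacts [hx, hΔz _ hx]
  have hP : P.card = 2 := card_orbitPair_eq_two_iff.2 (hΔfix x hx)
  obtain ⟨y, hyΔ, hyP⟩ := Finset.exists_mem_notMem_of_card_lt_card (s := P) (t := Δ) (by omega)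
  -- a class `{T, z • T}` is determined by the two points other than `x` of its member through `x`
  set R := ((Δ \ P).powersetCard 2).erase (z.orbitPair y)
  have hR : R.card = 5 := by
    rw [Finset.card_erase_of_mem, Finset.card_powersetCard, Finset.card_sdiff_of_subset hPΔ, hΔ, hP]
    · rfl
    refine Finset.mem_powersetCard.2 ⟨fun q hq => ?_, card_orbitPair_eq_two_iff.2 (hΔfix y hyΔ)⟩
    rcases mem_orbitPair.1 hq with rfl | rfl
    · exact Finset.mem_sdiff.2 ⟨hyΔ, hyP⟩
    · exact Finset.mem_sdiff.2 ⟨hΔz _ hyΔ, by rwa [apply_mem_orbitPair_iff hz]⟩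
  calc _ ≤ (R.image fun U => ({insert x U, z • insert x U} : Finset (Finset α))).card := by
        refine Finset.card_le_card fun c hc => ?_
        obtain ⟨T, hT, rfl⟩ := Finset.mem_image.1 hc
        have hT := (Finset.mem_filter.1 hT).2
        by_cases hxT : x ∈ T
        · exact Finset.mem_image.2
            ⟨T.erase x, hT.erase_mem hz hΔz hΔ hxT, by rw [Finset.insert_erase hxT]⟩
        · have hzT := hT.smul (Commute.refl z) fun p => ⟨fun h => hz p ▸ hΔz _ h, hΔz p⟩
          have hxzT : x ∈ z • T :=
            (mem_smul_finset_iff_of_involutive hz).2 (not_not.1 (mt (hT.2 x hx).2 hxT))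
          refine Finset.mem_image.2 ⟨(z • T).erase x, hzT.erase_mem hz hΔz hΔ hxzT, ?_⟩
          rw [Finset.insert_erase hxzT, smul_smul_finset_of_involutive hz, Finset.pair_comm]
    _ ≤ R.card := Finset.card_image_le
    _ = 5 := hR

end Equiv.Perm

namespace Subgroup

variable {α : Type*} {G : Subgroup (Perm α)} {z : Perm α} {Δ : Finset α}

def IsMinimallyEmbedded [Fintype α] (G : Subgroup (Perm α)) : Prop :=
  ∀ k < Fintype.card α, ∀ φ : G →* Perm (Fin k), ¬ Injective φ

theorem IsMinimallyEmbedded.exists_ne_one_forall_smul_eq [Fintype α]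
    (hG : G.IsMinimallyEmbedded) {β : Type*} [MulAction (Perm α) β] (Y : Finset β)
    (hY : ∀ g ∈ G, ∀ b ∈ Y, g • b ∈ Y) (hcard : Y.card < Fintype.card α) :
    ∃ g ∈ G, g ≠ 1 ∧ ∀ b ∈ Y, g • b = b := by
  let Y' : SubMulAction G β := ⟨Y, fun g b hb => hY g g.2 b hb⟩
  let _ : Fintype Y' := inferInstanceAs (Fintype {b // b ∈ Y})
  let e : Perm Y' ≃* Perm (Fin Y.card) :=
    (Fintype.equivFinOfCardEq (Fintype.card_coe Y)).permCongrHom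
  obtain ⟨g, hφg, hg1⟩ : ∃ g : G, MulAction.toPermHom G Y' g = 1 ∧ g ≠ 1 := by
    by_contra! h
    refine hG _ hcard (e.toMonoidHom.comp (MulAction.toPermHom G Y')) ?_
    exact (injective_iff_map_eq_one _).2 fun g hg => h g (by simpa using hg)
  refine ⟨g, g.2, fun h => hg1 (Subtype.ext h), fun b hb => ?_⟩
  exact congrArg Subtype.val (Perm.ext_iff.1 hφg ⟨b, hb⟩)

variable [DecidableEq α]

theorem IsMinimallyEmbedded.exists_ne_one_forall_smul_eq_of_card_lt [Fintype α]
    (hG : G.IsMinimallyEmbedded) {β : Type*} [MulAction (Perm α) β] (F : Finset β)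
    (hF : ∀ g ∈ G, ∀ b ∈ F, g • b ∈ F) (Δ : Finset α) (hΔ : ∀ g ∈ G, ∀ p ∈ Δ, g p ∈ Δ)
    (hcard : F.card < Δ.card) :
    ∃ g ∈ G, g ≠ 1 ∧ (∀ b ∈ F, g • b = b) ∧ ∀ p ∉ Δ, g p = p := by
  have hΔc : ∀ g ∈ G, ∀ p ∈ Δᶜ, g p ∈ Δᶜ := by
    intro g hg p hp
    rw [Finset.mem_compl] at hp ⊢
    exact fun hgp => hp (by simpa using hΔ g⁻¹ (inv_mem hg) (g p) hgp)
  obtain ⟨g, hg, hg1, hgY⟩ := hG.exists_ne_one_forall_smul_eq (F.disjSum Δᶜ) (by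
    rintro g hg (b | p) hb
    · simpa using hF g hg b (by simpa using hb)
    · simpa using hΔc g hg p (by simpa using hb)) (by
    rw [Finset.card_disjSum, Finset.card_compl]
    have := Δ.card_le_univ
    omega)
  refine ⟨g, hg, hg1, fun b hb => ?_, fun p hp => ?_⟩
  · simpa using hgY (.inl b) (by simpa using hb)
  · simpa using hgY (.inr p) (by simpa using hp)

variable (G) in
structure IsPairOrbit (z : Perm α) (Δ : Finset α) : Prop where
  apply_mem : ∀ g ∈ G, ∀ p ∈ Δ, g p ∈ Δ
  involution_apply_mem : ∀ p ∈ Δ, z p ∈ Δ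
  involution_apply_ne : ∀ p ∈ Δ, z p ≠ p
  exists_smul_orbitPair_eq : ∀ p ∈ Δ, ∀ q ∈ Δ, ∃ g ∈ G, g • z.orbitPair p = z.orbitPair q

theorem IsPairOrbit.apply_mem_iff (hΔ : G.IsPairOrbit z Δ) {g : Perm α} (hg : g ∈ G) (p : α) :
    g p ∈ Δ ↔ p ∈ Δ :=
  ⟨fun h => by simpa using hΔ.apply_mem g⁻¹ (inv_mem hg) _ h, hΔ.apply_mem g hg p⟩

theorem IsPairOrbit.mem_centralizer (hΔ : G.IsPairOrbit z Δ) (hzG : ∀ g ∈ G, Commute g z)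
    {w : Perm α} (hw : ∀ p, w p = if p ∈ Δ then z p else p) :
    w ∈ centralizer (G : Set (Perm α)) := by
  refine mem_centralizer_iff.2 fun g hg => Perm.ext fun p => ?_
  simp only [Perm.mul_apply, hw, hΔ.apply_mem_iff hg]
  split_ifs
  exacts [Perm.apply_apply_of_commute (hzG g hg) p, rfl]

theorem exists_isPairOrbit [Fintype α] (hz : Involutive z) (hzG : ∀ g ∈ G, Commute g z) {x : α}
    (hx : z x ≠ x) : ∃ Δ, G.IsPairOrbit z Δ ∧ x ∈ Δ := by
  classical
  let O := MulAction.orbit G (z.orbitPair x)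
  refine ⟨Finset.univ.filter fun p => z.orbitPair p ∈ O, ⟨?_, ?_, ?_, ?_⟩, ?_⟩ <;>
    simp only [Finset.mem_filter, Finset.mem_univ, true_and]
  · intro g hg p hp
    rw [← Perm.smul_orbitPair (hzG g hg)]
    exact MulAction.mem_orbit_of_mem_orbit (⟨g, hg⟩ : G) hp
  · intro p hp
    rwa [Perm.orbitPair_apply hz]
  · intro p hp
    obtain ⟨g, hg⟩ := MulAction.mem_orbit_iff.1 hp
    rw [← Perm.card_orbitPair_eq_two_iff, ← hg, Finset.card_smul_finset,
      Perm.card_orbitPair_eq_two_iff]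
    exact hx
  · intro p hp q hq
    have hpq : z.orbitPair q ∈ MulAction.orbit G (z.orbitPair p) := MulAction.orbit_eq_iff.1
      ((MulAction.orbit_eq_iff.2 hq).trans (MulAction.orbit_eq_iff.2 hp).symm)
    obtain ⟨g, hg⟩ := MulAction.mem_orbit_iff.1 hpq
    exact ⟨g, g.2, hg⟩
  · exact MulAction.mem_orbit_self _

namespace IsMinimallyEmbedded

variable [Fintype α]

theorem exists_nonempty_isPairFlip (hG : G.IsMinimallyEmbedded) (hz : Involutive z)
    (hzG : ∀ g ∈ G, Commute g z) (hΔ : G.IsPairOrbit z Δ) (hne : Δ.Nonempty) :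
    ∃ 𝒜 ⊆ Δ.image z.orbitPair, 𝒜.Nonempty ∧ ∃ g ∈ G, z.IsPairFlip 𝒜 g := by
  set X := Δ.image z.orbitPair
  have hcard : Δ.card = 2 * X.card := Perm.card_eq_two_mul_card_image_orbitPair hz
    hΔ.involution_apply_mem hΔ.involution_apply_ne
  have hXG : ∀ g ∈ G, ∀ Q ∈ X, g • Q ∈ X := by
    intro g hg Q hQ
    obtain ⟨p, hp, rfl⟩ := Finset.mem_image.1 hQ
    rw [Perm.smul_orbitPair (hzG g hg)]
    exact Finset.mem_image_of_mem _ (hΔ.apply_mem g hg p hp)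
  obtain ⟨g, hg, hg1, hgX, hgout⟩ :=
    hG.exists_ne_one_forall_smul_eq_of_card_lt X hXG Δ hΔ.apply_mem (by
      have := Finset.card_pos.2 hne
      omega)
  obtain ⟨p, hp⟩ : ∃ p, g p ≠ p := by
    by_contra! h
    exact hg1 (Perm.ext h)
  have hpΔ : p ∈ Δ := by_contra fun h => hp (hgout p h)
  refine ⟨(Δ.filter fun p => g p ≠ p).image z.orbitPair,
    Finset.image_subset_image (Finset.filter_subset _ _),
    ⟨z.orbitPair p, Finset.mem_image_of_mem _ (Finset.mem_filter.2 ⟨hpΔ, hp⟩)⟩, g, hg,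
    Perm.isPairFlip_of_smul_orbitPair_eq hz hΔ.involution_apply_mem (hzG g hg)
      (fun q hq => hgX _ (Finset.mem_image_of_mem _ hq)) hgout⟩

theorem exists_mem_isPairFlip_of_card_ne_six (hG : G.IsMinimallyEmbedded) (hz : Involutive z)
    (hzG : ∀ g ∈ G, Commute g z) (hΔ : G.IsPairOrbit z Δ) (hne : Δ.Nonempty) (h8 : Δ.card ≤ 8)
    (h6 : Δ.card ≠ 6) : ∃ w ∈ G, z.IsPairFlip (Δ.image z.orbitPair) w := by
  set X := Δ.image z.orbitPair
  have hcard : Δ.card = 2 * X.card := Perm.card_eq_two_mul_card_image_orbitPair hz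
    hΔ.involution_apply_mem hΔ.involution_apply_ne
  let S : Set (Finset (Finset α)) := {𝒜 | 𝒜 ⊆ X ∧ ∃ w ∈ G, z.IsPairFlip 𝒜 w}
  suffices X ∈ S from this.2
  refine Finset.mem_of_invariant_code (H := G) (by omega) (by omega) ?_ (fun 𝒜 h => h.1) ?_ ?_ ?_
  · intro Q hQ Q' hQ'
    obtain ⟨p, hp, rfl⟩ := Finset.mem_image.1 hQ
    obtain ⟨q, hq, rfl⟩ := Finset.mem_image.1 hQ'
    obtain ⟨g, hg, hgpq⟩ := hΔ.exists_smul_orbitPair_eq p hp q hq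
    exact ⟨⟨g, hg⟩, hgpq⟩
  · rintro 𝒜 ⟨h𝒜X, g, hg, hg𝒜⟩ ℬ ⟨hℬX, h, hh, hhℬ⟩
    exact ⟨Finset.symmDiff_subset_union.trans (Finset.union_subset h𝒜X hℬX), g * h,
      mul_mem hg hh, hg𝒜.mul hz hhℬ⟩
  · rintro ⟨τ, hτ⟩ 𝒜 ⟨h𝒜X, g, hg, hg𝒜⟩
    refine ⟨fun Q hQ => ?_, τ * g * τ⁻¹, mul_mem (mul_mem hτ hg) (inv_mem hτ),
      hg𝒜.conj (hzG τ hτ)⟩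
    obtain ⟨Q', hQ', rfl⟩ := Finset.mem_smul_finset.1 hQ
    obtain ⟨p, hp, rfl⟩ := Finset.mem_image.1 (h𝒜X hQ')
    rw [Subgroup.smul_def, Perm.smul_orbitPair (hzG τ hτ)]
    exact Finset.mem_image_of_mem _ (hΔ.apply_mem τ hτ p hp)
  · obtain ⟨𝒜, h𝒜X, h𝒜, g, hg, hg𝒜⟩ := hG.exists_nonempty_isPairFlip hz hzG hΔ hne
    exact ⟨𝒜, ⟨h𝒜X, g, hg, hg𝒜⟩, h𝒜⟩

theorem exists_mem_restriction_of_card_eq_six (hG : G.IsMinimallyEmbedded) (hz : Involutive z)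
    (hzG : ∀ g ∈ G, Commute g z) (hΔ : G.IsPairOrbit z Δ) (h6 : Δ.card = 6) :
    ∃ w ∈ G, ∀ p, w p = if p ∈ Δ then z p else p := by
  have hΔz := hΔ.involution_apply_mem
  have hΔfix := hΔ.involution_apply_ne
  have hTC : ∀ T, z.IsTransversal Δ T → T ∈ Δ.powerset.filter (z.IsTransversal Δ) :=
    fun T hT => Finset.mem_filter.2 ⟨Finset.mem_powerset.2 hT.1, hT⟩
  set C := (Δ.powerset.filter (z.IsTransversal Δ)).image
    fun T => ({T, z • T} : Finset (Finset α))
  have hCG : ∀ g ∈ G, ∀ c ∈ C, g • c ∈ C := by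
    intro g hg c hc
    obtain ⟨T, hT, rfl⟩ := Finset.mem_image.1 hc
    refine Finset.mem_image.2 ⟨g • T, hTC _ ((Finset.mem_filter.1 hT).2.smul (hzG g hg)
      (hΔ.apply_mem_iff hg)), ?_⟩
    rw [Finset.smul_finset_insert, Finset.smul_finset_singleton, smul_smul, smul_smul,
      (hzG g hg).eq]
  obtain ⟨ξ, hξG, hξ1, hξC, hξout⟩ := hG.exists_ne_one_forall_smul_eq_of_card_lt C hCG Δ
    hΔ.apply_mem (by
      have : C.card ≤ 5 := Perm.card_image_pair_isTransversal_le_five hz hΔz hΔfix h6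
      omega)
  have hξT : ∀ T, z.IsTransversal Δ T → ξ • T = T ∨ ξ • T = z • T := by
    intro T hT
    have hmem : ξ • T ∈ ({T, z • T} : Finset (Finset α)) := by
      rw [← hξC _ (Finset.mem_image_of_mem _ (hTC T hT))]
      exact Finset.smul_mem_smul_finset (Finset.mem_insert_self _ _)
    simpa using hmem
  rcases Perm.forall_apply_eq_or_of_forall_isTransversal hz hΔz hΔfix h6 (hzG ξ hξG) hξT with
    hid | hflip
  · exact absurd (Perm.ext fun p => if hp : p ∈ Δ then hid p hp else hξout p hp) hξ1
  · exact ⟨ξ, hξG, fun p => by split_ifs with hp; exacts [hflip p hp, hξout p hp]⟩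

theorem exists_mem_restriction (hG : G.IsMinimallyEmbedded) (hα : Fintype.card α ≤ 9)
    (hz : Involutive z) (hzG : ∀ g ∈ G, Commute g z) (hΔ : G.IsPairOrbit z Δ)
    (hne : Δ.Nonempty) : ∃ w ∈ G, ∀ p, w p = if p ∈ Δ then z p else p := by
  obtain h6 | h6 := eq_or_ne Δ.card 6
  · exact hG.exists_mem_restriction_of_card_eq_six hz hzG hΔ h6
  have h8 : Δ.card ≤ 8 := by
    have := Perm.card_eq_two_mul_card_image_orbitPair hz hΔ.involution_apply_mem
      hΔ.involution_apply_ne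
    have := Δ.card_le_univ
    omega
  obtain ⟨w, hw, hwΔ⟩ := hG.exists_mem_isPairFlip_of_card_ne_six hz hzG hΔ hne h8 h6
  exact ⟨w, hw, (Perm.isPairFlip_image_orbitPair_iff hz hΔ.involution_apply_mem).1 hwΔ⟩

theorem mem_of_involutive (hG : G.IsMinimallyEmbedded) (hα : Fintype.card α ≤ 9)
    (hz : Involutive z) (hzG : z ∈ centralizer (G : Set (Perm α))) : z ∈ G := by
  induction hn : z.support.card using Nat.strong_induction_on generalizing z with
  | _ n ih =>
  have hcomm : ∀ g ∈ G, Commute g z := fun g hg => mem_centralizer_iff.1 hzG g hg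
  obtain rfl | ⟨x, hx⟩ : z = 1 ∨ ∃ x, z x ≠ x := by
    by_contra! h
    exact h.1 (Perm.ext h.2)
  · exact one_mem G
  obtain ⟨Δ, hΔ, hxΔ⟩ := exists_isPairOrbit hz hcomm hx
  obtain ⟨w, hwG, hw⟩ := hG.exists_mem_restriction hα hz hcomm hΔ ⟨x, hxΔ⟩
  have hzw : ∀ p, (z * w) p = if p ∈ Δ then p else z p := fun p => by
    rw [Perm.mul_apply, hw]
    split_ifs
    exacts [hz p, rfl]
  have hzw_inv : Involutive (z * w) := fun p => by
    by_cases hp : p ∈ Δ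
    · simp [hzw, hp]
    · have hzp : z p ∉ Δ := fun h => hp (hz p ▸ hΔ.involution_apply_mem _ h)
      simp [hzw, hp, hzp, hz p]
  have hsupp : (z * w).support ⊂ z.support := by
    refine Finset.ssubset_iff_of_subset (fun p hp => ?_) |>.2 ⟨x, ?_, ?_⟩
    · rw [Perm.mem_support, hzw] at hp
      rw [Perm.mem_support]
      split_ifs at hp with h
      exacts [absurd rfl hp, hp]
    · exact Perm.mem_support.2 hx
    · simp [Perm.mem_support, hzw, hxΔ]
  have := ih _ (hn ▸ Finset.card_lt_card hsupp) hzw_inv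
    (mul_mem hzG (hΔ.mem_centralizer hcomm hw)) rfl
  simpa using mul_mem this (inv_mem hwG)

end IsMinimallyEmbedded

end Subgroup

theorem involution_in_centralizer_mem_of_le_nine (m : ℕ) (hm : m ≤ 9)
    (G : Subgroup (Equiv.Perm (Fin m)))
    (hmin : ∀ k < m, ∀ φ : G →* Equiv.Perm (Fin k), ¬ Function.Injective φ)
    (g : Equiv.Perm (Fin m))
    (hg : g ∈ Subgroup.centralizer (G : Set (Equiv.Perm (Fin m))))
    (hord : orderOf g = 2) :
    g ∈ G := by
  have hG : G.IsMinimallyEmbedded := fun k hk => hmin k (by simpa using hk)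
  refine hG.mem_of_involutive (by simpa using hm) (fun p => ?_) hg
  rw [← Perm.mul_apply, ← sq, ← hord, pow_orderOf_eq_one, Perm.one_apply]
end

section
/- For every subgroup G of Sym(7) that is minimally embedded (i.e., G admits no injective group homomorphism into Sym(k) for any k < 7), the index of G in the join of G with the centralizer of G in Sym(7) divides 2. -/
/-!
Minimality of the degree says that `G` acts faithfully on no proper invariant subset. Hence every
`G`-orbit `O` supports a nontrivial element `k_O` of `G`, so orbits have at least two points, and
the centralizer `C` preserves every orbit. An element of `C` fixing a point of `O` fixes `O`, so
the elements of `C` supported on `O` form a group `D_O` acting semiregularly on `O`: its order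
divides `|O|`, and if it equals `|O|` and `D_O` is abelian, then `k_O ∈ D_O`. In degree 7 the
orbits have 2, 3, 4, 5 or 7 points with at most one orbit of size 4. So `D_O ≤ G` on the orbits
of prime size and `[D_O : D_O ∩ G] ≤ 2` on an orbit of size 4; as `C` is the product of the
`D_O`, this gives `[C : C ∩ G] ≤ 2`, which equals `[G C : G]` by the second isomorphism theorem.
-/

open Equiv MulAction

theorem MulAction.card_dvd_ncard_of_stabilizer_eq_bot {H α : Type*} [Group H] [MulAction H α]
    [Finite α] {s : Set α} (hs : ∀ h : H, ∀ y ∈ s, h • y ∈ s)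
    (hfree : ∀ y ∈ s, stabilizer H y = ⊥) : Nat.card H ∣ s.ncard := by
  classical
  rw [Set.ncard_eq_toFinset_card s, Finset.card_eq_sum_card_image (orbit H ·)]
  refine Finset.dvd_sum fun B hB => ?_
  obtain ⟨y, hy, rfl⟩ := Finset.mem_image.1 hB
  rw [Set.Finite.mem_toFinset] at hy
  have hfiber : (({z ∈ (Set.toFinite s).toFinset | orbit H z = orbit H y} : Finset α) : Set α)
      = orbit H y := by
    ext z
    simp only [Finset.coe_filter, Set.Finite.mem_toFinset, Set.mem_ofPred_eq, orbit_eq_iff]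
    refine ⟨And.right, fun hz => ⟨?_, hz⟩⟩
    obtain ⟨h, rfl⟩ := hz
    exact hs h y hy
  rw [← Set.ncard_coe_finset, hfiber, ← index_stabilizer, hfree y hy, Subgroup.index_bot]

theorem Subgroup.relIndex_sup_centralizer {M : Type*} [Group M] (H : Subgroup M) :
    H.relIndex (H ⊔ centralizer (H : Set M)) = H.relIndex (centralizer H) := by
  have hle := centralizer_le_normalizer (H : Set M)
  have := normal_subgroupOf_of_le_normalizer hle
  have := normal_subgroupOf_sup_of_le_normalizer hle
  rw [sup_comm]
  exact Nat.card_congr (QuotientGroup.quotientInfEquivProdNormalizerQuotient _ H hle).toEquiv.symm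

theorem Equiv.Perm.apply_eq_of_mem_fixingSubgroup {α : Type*} {g : Perm α} {s : Set α}
    (hg : g ∈ fixingSubgroup (Perm α) s) {y : α} (hy : y ∈ s) : g y = y :=
  (mem_fixingSubgroup_iff _).1 hg y hy

namespace Subgroup

variable {α : Type*} (G : Subgroup (Perm α))

theorem mem_orbit_iff_exists_apply {x y : α} : y ∈ orbit G x ↔ ∃ g ∈ G, g x = y :=
  mem_orbit_iff.trans ⟨fun ⟨g, h⟩ => ⟨g, g.2, h⟩, fun ⟨g, hg, h⟩ => ⟨⟨g, hg⟩, h⟩⟩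

def OrbitsSupportNontrivial : Prop :=
  ∀ x : α, ∃ k ∈ G, k ≠ 1 ∧ k ∈ fixingSubgroup (Perm α) (orbit G x)ᶜ

variable {G}

theorem orbit_apply_of_mem {g : Perm α} (hg : g ∈ G) (x : α) : orbit G (g x) = orbit G x :=
  orbit_smul (⟨g, hg⟩ : G) x

theorem apply_mem_orbit_iff_of_mem {g : Perm α} (hg : g ∈ G) {x y : α} :
    g y ∈ orbit G x ↔ y ∈ orbit G x := by
  rw [← orbit_eq_iff, orbit_apply_of_mem hg, orbit_eq_iff]

theorem exists_ne_one_mem_fixingSubgroup [Finite α]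
    (hmin : ∀ k < Nat.card α, ∀ φ : G →* Perm (Fin k), ¬ Function.Injective φ)
    {s : Set α} (hs : ∀ g ∈ G, ∀ y, g y ∈ s ↔ y ∈ s) (hlt : s.ncard < Nat.card α) :
    ∃ k ∈ G, k ≠ 1 ∧ k ∈ fixingSubgroup (Perm α) s := by
  by_contra! h
  let φ : G →* Perm s :=
    { toFun := fun g => (g : Perm α).subtypePerm (hs g g.2)
      map_one' := rfl
      map_mul' := fun _ _ => rfl }
  have hφ : Function.Injective φ := by
    refine (injective_iff_map_eq_one φ).2 fun g hg => Subtype.ext (by_contra fun hne => ?_)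
    refine h g g.2 hne ((mem_fixingSubgroup_iff _).2 fun y hy => ?_)
    exact congrArg (fun σ : Perm s => (σ ⟨y, hy⟩ : α)) hg
  rw [← Nat.card_coe_set_eq] at hlt
  exact hmin _ hlt ((Finite.equivFin s).permCongrHom.toMonoidHom.comp φ)
    ((Finite.equivFin s).permCongrHom.injective.comp hφ)

theorem orbitsSupportNontrivial_of_forall_not_injective [Finite α]
    (hmin : ∀ k < Nat.card α, ∀ φ : G →* Perm (Fin k), ¬ Function.Injective φ) :
    G.OrbitsSupportNontrivial := fun x => by
  refine exists_ne_one_mem_fixingSubgroup hmin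
    (fun g hg y => (apply_mem_orbit_iff_of_mem hg).not) ?_
  rw [← Set.ncard_univ]
  exact Set.ncard_lt_ncard (Set.compl_ssubset_univ.2 ⟨x, mem_orbit_self x⟩)

theorem apply_comm_of_mem_centralizer {c g : Perm α} (hc : c ∈ centralizer (G : Set (Perm α)))
    (hg : g ∈ G) (y : α) : c (g y) = g (c y) :=
  (congrArg (· y) (mem_centralizer_iff.1 hc g hg)).symm

theorem apply_mem_orbit_apply_of_mem_centralizer {c : Perm α}
    (hc : c ∈ centralizer (G : Set (Perm α))) {x y : α} (hy : y ∈ orbit G x) :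
    c y ∈ orbit G (c x) := by
  obtain ⟨g, hg, rfl⟩ := (mem_orbit_iff_exists_apply G).1 hy
  rw [apply_comm_of_mem_centralizer hc hg]
  exact (mem_orbit_iff_exists_apply G).2 ⟨g, hg, rfl⟩

theorem orbit_apply_of_mem_centralizer
    (hG : G.OrbitsSupportNontrivial) {c : Perm α} (hc : c ∈ centralizer (G : Set (Perm α))) (x : α) :
    orbit G (c x) = orbit G x := by
  by_contra hne
  obtain ⟨k, hkG, hk1, hkx⟩ := hG x
  refine hk1 (Perm.ext fun z => ?_)
  by_cases hz : z ∈ orbit G x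
  · have hcz : c z ∉ orbit G x := fun h => hne <|
      (orbit_eq_iff.2 (apply_mem_orbit_apply_of_mem_centralizer hc hz)).symm.trans
        (orbit_eq_iff.2 h)
    exact c.injective ((apply_comm_of_mem_centralizer hc hkG z).trans
      (Perm.apply_eq_of_mem_fixingSubgroup hkx hcz))
  · exact Perm.apply_eq_of_mem_fixingSubgroup hkx hz

theorem apply_mem_orbit_iff_of_mem_centralizer
    (hG : G.OrbitsSupportNontrivial) {c : Perm α} (hc : c ∈ centralizer (G : Set (Perm α))) {x y : α} :
    c y ∈ orbit G x ↔ y ∈ orbit G x := by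
  rw [← orbit_eq_iff, orbit_apply_of_mem_centralizer hG hc, orbit_eq_iff]

variable (G) in
/-- The group `D_O` for `O = orbit G x`. -/
def localCentralizer (x : α) : Subgroup (Perm α) :=
  centralizer (G : Set (Perm α)) ⊓ fixingSubgroup (Perm α) (orbit G x)ᶜ

theorem eq_one_of_mem_localCentralizer {d : Perm α} {x y : α} (hd : d ∈ G.localCentralizer x)
    (hy : y ∈ orbit G x) (hdy : d y = y) : d = 1 := by
  refine Perm.ext fun z => ?_
  by_cases hz : z ∈ orbit G x
  · rw [← orbit_eq_iff.2 hy] at hz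
    obtain ⟨g, hg, rfl⟩ := (mem_orbit_iff_exists_apply G).1 hz
    rw [apply_comm_of_mem_centralizer hd.1 hg, hdy, Perm.one_apply]
  · exact Perm.apply_eq_of_mem_fixingSubgroup hd.2 hz

theorem apply_mem_orbit_of_mem_localCentralizer {d : Perm α} {x y : α}
    (hd : d ∈ G.localCentralizer x) (hy : y ∈ orbit G x) : d y ∈ orbit G x := by
  by_contra h
  rw [d.injective (Perm.apply_eq_of_mem_fixingSubgroup hd.2 h)] at h
  exact h hy

theorem stabilizer_localCentralizer_eq_bot {x y : α} (hy : y ∈ orbit G x) :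
    stabilizer (G.localCentralizer x) y = ⊥ :=
  (eq_bot_iff_forall _).2 fun d hd =>
    Subtype.ext (eq_one_of_mem_localCentralizer d.2 hy hd)

theorem ncard_orbit_localCentralizer {x y : α} (hy : y ∈ orbit G x) :
    (orbit (G.localCentralizer x) y).ncard = Nat.card (G.localCentralizer x) := by
  rw [← index_stabilizer, stabilizer_localCentralizer_eq_bot hy, index_bot]

theorem card_localCentralizer_dvd [Finite α] (x : α) :
    Nat.card (G.localCentralizer x) ∣ (orbit G x).ncard :=
  card_dvd_ncard_of_stabilizer_eq_bot
    (fun d _ hy => apply_mem_orbit_of_mem_localCentralizer d.2 hy)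
    (fun _ hy => stabilizer_localCentralizer_eq_bot hy)

/-- The hypothesis makes `G.localCentralizer x` regular on the orbit, so `k`, which commutes with
it, acts on the orbit as the element of it that moves `x` to `k x`. -/
theorem mem_localCentralizer_of_card_eq [Finite α] {x : α}
    (hcard : Nat.card (G.localCentralizer x) = (orbit G x).ncard)
    [IsMulCommutative (G.localCentralizer x)] {k : Perm α} (hkG : k ∈ G)
    (hkx : k ∈ fixingSubgroup (Perm α) (orbit G x)ᶜ) : k ∈ G.localCentralizer x := by
  have horbit : orbit (G.localCentralizer x) x = orbit G x := by
    refine Set.eq_of_subset_of_ncard_le ?_ ?_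
    · rintro _ ⟨d, rfl⟩
      exact apply_mem_orbit_of_mem_localCentralizer d.2 (mem_orbit_self x)
    · rw [ncard_orbit_localCentralizer (mem_orbit_self x), hcard]
  obtain ⟨d, hd⟩ : k x ∈ orbit (G.localCentralizer x) x :=
    horbit ▸ (mem_orbit_iff_exists_apply G).2 ⟨k, hkG, rfl⟩
  change (d : Perm α) x = k x at hd
  suffices k = d from this ▸ d.2
  refine Perm.ext fun y => ?_
  by_cases hy : y ∈ orbit G x
  · rw [← horbit] at hy
    obtain ⟨d', rfl⟩ := hy
    change k ((d' : Perm α) x) = (d : Perm α) ((d' : Perm α) x)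
    rw [← apply_comm_of_mem_centralizer d'.2.1 hkG, ← hd]
    exact congrArg (fun σ : G.localCentralizer x => (σ : Perm α) x) (mul_comm' d' d)
  · exact (Perm.apply_eq_of_mem_fixingSubgroup hkx hy).trans
      (Perm.apply_eq_of_mem_fixingSubgroup d.2.2 hy).symm

theorem subgroupOf_localCentralizer_ne_bot [Finite α] (hG : G.OrbitsSupportNontrivial) {x : α}
    (hcard : Nat.card (G.localCentralizer x) = (orbit G x).ncard)
    [IsMulCommutative (G.localCentralizer x)] :
    G.subgroupOf (G.localCentralizer x) ≠ ⊥ := by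
  obtain ⟨k, hkG, hk1, hkx⟩ := hG x
  intro hbot
  exact hk1 (congrArg Subtype.val ((eq_bot_iff_forall _).1 hbot
    ⟨k, mem_localCentralizer_of_card_eq hcard hkG hkx⟩ hkG))

theorem localCentralizer_le_of_prime [Finite α] (hG : G.OrbitsSupportNontrivial) {x : α}
    (hp : (orbit G x).ncard.Prime) : G.localCentralizer x ≤ G := by
  rcases (Nat.dvd_prime hp).1 (card_localCentralizer_dvd x) with hone | hcard
  · rw [eq_bot_of_card_eq _ hone]
    exact bot_le
  · have : Fact (Nat.card (G.localCentralizer x)).Prime := ⟨hcard ▸ hp⟩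
    have := isCyclic_of_prime_card (α := G.localCentralizer x) rfl
    let := IsCyclic.commGroup (α := G.localCentralizer x)
    have hne := subgroupOf_localCentralizer_ne_bot hG hcard
    exact subgroupOf_eq_top.1 ((eq_bot_or_eq_top_of_prime_card _).resolve_left hne)

theorem relIndex_localCentralizer_dvd_two [Finite α] (hG : G.OrbitsSupportNontrivial) {x : α}
    (h4 : (orbit G x).ncard = 4) : G.relIndex (G.localCentralizer x) ∣ 2 := by
  set D := G.localCentralizer x
  have hcard : Nat.card D ∣ 2 ^ 2 := by
    rw [show 2 ^ 2 = 4 from rfl, ← h4]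
    exact card_localCentralizer_dvd x
  obtain ⟨j, hj, hindex⟩ :=
    (Nat.dvd_prime_pow Nat.prime_two).1 ((index_dvd_card (G.subgroupOf D)).trans hcard)
  interval_cases j
  · simp [relIndex, hindex]
  · simp [relIndex, hindex]
  have hcard : Nat.card D = 2 ^ 2 := Nat.dvd_antisymm hcard (hindex ▸ index_dvd_card _)
  have := IsPGroup.isMulCommutative_of_card_eq_prime_sq hcard
  have hmul := card_mul_index (G.subgroupOf D)
  rw [hindex, hcard] at hmul
  exact (subgroupOf_localCentralizer_ne_bot hG (hcard.trans h4.symm)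
    (eq_bot_of_card_eq _ (by simpa using hmul))).elim

theorem exists_mem_localCentralizer_eqOn
    (hG : G.OrbitsSupportNontrivial) {c : Perm α} (hc : c ∈ centralizer (G : Set (Perm α))) (x : α) :
    ∃ d ∈ G.localCentralizer x, Set.EqOn d c (orbit G x) := by
  classical
  refine ⟨Perm.ofSubtype (c.subtypePerm fun y => apply_mem_orbit_iff_of_mem_centralizer hG hc),
    ⟨mem_centralizer_iff.2 fun g hg => Perm.ext fun y => ?_,
      (mem_fixingSubgroup_iff _).2 fun y hy => Perm.ofSubtype_apply_of_not_mem _ hy⟩,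
    fun y hy => Perm.ofSubtype_apply_of_mem _ hy⟩
  by_cases hy : y ∈ orbit G x
  · have hgy := (apply_mem_orbit_iff_of_mem hg).2 hy
    simp [Perm.ofSubtype_apply_of_mem, hy, hgy, apply_comm_of_mem_centralizer hc hg]
  · have hgy := (apply_mem_orbit_iff_of_mem hg).not.2 hy
    simp [Perm.ofSubtype_apply_of_not_mem, hy, hgy]

theorem exists_mem_inf_centralizer_eqOn
    (hG : G.OrbitsSupportNontrivial) {c : Perm α} (hc : c ∈ centralizer (G : Set (Perm α))) (t : Finset α)
    (ht : ∀ y ∈ t, G.localCentralizer y ≤ G) :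
    ∃ g ∈ G ⊓ centralizer (G : Set (Perm α)), Set.EqOn g c t := by
  classical
  induction t using Finset.induction_on with
  | empty => exact ⟨1, one_mem _, by simp⟩
  | insert a t _ ih =>
    obtain ⟨g, hg, hgt⟩ := ih fun y hy => ht y (Finset.mem_insert_of_mem hy)
    obtain ⟨d, hd, hda⟩ := exists_mem_localCentralizer_eqOn hG (mul_mem (inv_mem hg.2) hc) a
    refine ⟨g * d, mul_mem hg ⟨ht a (Finset.mem_insert_self a t) hd, hd.1⟩, fun y hy => ?_⟩
    by_cases hya : y ∈ orbit G a
    · rw [Perm.mul_apply, hda hya, Perm.mul_apply]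
      exact g.apply_symm_apply (c y)
    · have hyt : y ∈ t := (Finset.mem_insert.1 hy).resolve_left
        (by rintro rfl; exact hya (mem_orbit_self y))
      rw [Perm.mul_apply, Perm.apply_eq_of_mem_fixingSubgroup hd.2 hya, hgt hyt]

theorem relIndex_centralizer_dvd_two [Finite α] (hG : G.OrbitsSupportNontrivial) (x : α)
    (hx : G.relIndex (G.localCentralizer x) ∣ 2)
    (hle : ∀ y ∉ orbit G x, G.localCentralizer y ≤ G) :
    G.relIndex (centralizer (G : Set (Perm α))) ∣ 2 := by
  classical
  have hdecomp : ∀ c ∈ centralizer (G : Set (Perm α)),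
      ∃ g ∈ G, g⁻¹ * c ∈ G.localCentralizer x := by
    intro c hc
    obtain ⟨g, hg, hgc⟩ := exists_mem_inf_centralizer_eqOn hG hc
      (Set.toFinite (orbit G x)ᶜ).toFinset (by simpa using hle)
    refine ⟨g, hg.1, mem_inf.2 ⟨mul_mem (inv_mem hg.2) hc,
      (mem_fixingSubgroup_iff _).2 fun y hy => ?_⟩⟩
    rw [Perm.smul_def, Perm.mul_apply, ← hgc (by simpa using hy)]
    exact g.symm_apply_apply y
  obtain ⟨a, ha, hxa⟩ := relIndex_dvd_two_iff.1 hx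
  refine relIndex_dvd_two_iff.2 ⟨a, ha.1, fun b hb => ?_⟩
  obtain ⟨g, hg, hgb⟩ := hdecomp b hb
  rcases hxa _ hgb with h | h
  · left
    simpa [mul_assoc] using mul_mem hg h
  · right
    simpa using mul_mem hg h

theorem one_lt_ncard_orbit [Finite α] (hG : G.OrbitsSupportNontrivial) (x : α) :
    1 < (orbit G x).ncard := by
  obtain ⟨k, hkG, hk1, hkx⟩ := hG x
  obtain ⟨z, hz⟩ : ∃ z, k z ≠ z := by
    by_contra! h
    exact hk1 (Perm.ext h)
  have hzx : z ∈ orbit G x := by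
    by_contra h
    exact hz (Perm.apply_eq_of_mem_fixingSubgroup hkx h)
  exact (Set.one_lt_ncard_iff).2 ⟨k z, z, (apply_mem_orbit_iff_of_mem hkG).2 hzx, hzx, hz⟩

theorem ncard_orbit_add_ncard_orbit_le [Finite α] {x y : α} (hy : y ∉ orbit G x) :
    (orbit G x).ncard + (orbit G y).ncard ≤ Nat.card α := by
  have hdisj := (orbit.eq_or_disjoint x y).resolve_left fun h => hy (h ▸ mem_orbit_self y)
  rw [← Set.ncard_union_eq hdisj, ← Set.ncard_univ]
  exact Set.ncard_le_ncard (Set.subset_univ _)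

end Subgroup

theorem Subgroup.prime_ncard_orbit_of_ne_four {G : Subgroup (Perm (Fin 7))}
    (hG : G.OrbitsSupportNontrivial) {x : Fin 7} (h4 : (orbit G x).ncard ≠ 4) : (orbit G x).ncard.Prime := by
  have h1 := one_lt_ncard_orbit hG x
  have h7 : (orbit G x).ncard ≤ 7 := by
    simpa using Set.ncard_le_ncard (Set.subset_univ (orbit G x))
  have h6 : (orbit G x).ncard ≠ 6 := by
    intro h6
    obtain ⟨y, hy⟩ : ∃ y, y ∉ orbit G x := by
      by_contra! h
      rw [Set.eq_univ_of_forall h] at h6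
      simp at h6
    have := ncard_orbit_add_ncard_orbit_le hy
    have := one_lt_ncard_orbit hG y
    simp only [Nat.card_eq_fintype_card, Fintype.card_fin] at *
    omega
  interval_cases (orbit G x).ncard <;> first | omega | norm_num

theorem Subgroup.exists_forall_notMem_orbit_ncard_ne_four (G : Subgroup (Perm (Fin 7))) :
    ∃ x : Fin 7, ∀ y ∉ orbit G x, (orbit G y).ncard ≠ 4 := by
  by_cases h : ∃ x : Fin 7, (orbit G x).ncard = 4
  · obtain ⟨x, hx⟩ := h
    refine ⟨x, fun y hy hy4 => ?_⟩
    have := ncard_orbit_add_ncard_orbit_le hy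
    simp only [Nat.card_eq_fintype_card, Fintype.card_fin] at this
    omega
  · exact ⟨0, fun y _ hy => h ⟨y, hy⟩⟩

theorem relindex_dvd_two_of_deg_seven
    (G : Subgroup (Equiv.Perm (Fin 7)))
    (hmin : ∀ k < 7, ∀ φ : G →* Equiv.Perm (Fin k), ¬ Function.Injective φ) :
    Subgroup.relIndex G (G ⊔ Subgroup.centralizer (G : Set (Equiv.Perm (Fin 7)))) ∣ 2 := by
  have hG := G.orbitsSupportNontrivial_of_forall_not_injective (by simpa using hmin)
  have hprime : ∀ y, (orbit G y).ncard ≠ 4 → G.localCentralizer y ≤ G := fun y hy =>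
    G.localCentralizer_le_of_prime hG (G.prime_ncard_orbit_of_ne_four hG hy)
  obtain ⟨x, hx⟩ := G.exists_forall_notMem_orbit_ncard_ne_four
  rw [G.relIndex_sup_centralizer]
  refine G.relIndex_centralizer_dvd_two hG x ?_ fun y hy => hprime y (hx y hy)
  by_cases h4 : (orbit G x).ncard = 4
  · exact G.relIndex_localCentralizer_dvd_two hG h4
  · rw [Subgroup.relIndex_eq_one.2 (hprime x h4)]
    exact one_dvd 2
end
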